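/- arXiv:2505.06220 — 4 statements merged into one kernel-verified Lean document; each statement's English description precedes it below -/
import Mathlib

section
/- Suppose the Christoffel symbols Γ on U satisfy the symmetry of ∇c: for all indices, Σ_{t(τ)} (Γ^{i(α)}_{j(β)t(τ)} c^{t(τ)}_{k(γ)s(σ)} − Γ^{t(τ)}_{j(β)s(σ)} c^{i(α)}_{k(γ)t(τ)} − Γ^{i(α)}_{k(γ)t(τ)} c^{t(τ)}_{j(β)s(σ)} + Γ^{t(τ)}_{k(γ)s(σ)} c^{i(α)}_{j(β)t(τ)}) = 0. Then for every α and all i, j ∈ {1,…,m_α}: Γ^{i(α)}_{1(α)j(α)} = Γ^{(i−j+1)(α)}_{1(α)1(α)} whenever i ≥ j, and Γ^{i(α)}_{1(α)j(α)} = 0 whenever i < j. -/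
open scoped BigOperators

/-- Coordinate domain: one real coordinate `u^{i(α)}` for each block `α` and each
1-based index `i ∈ {1,…,m α}`; the element `⟨α, p⟩` corresponds to `(p+1)(α)`. -/
abbrev Dom (r : ℕ) (m : Fin r → ℕ) : Type := ((α : Fin r) × Fin (m α)) → ℝ

/-- `InR m α i`: the 1-based integer index `i` is admissible in block `α`. -/
abbrev InR {r : ℕ} (m : Fin r → ℕ) (α : Fin r) (i : ℤ) : Prop :=
  1 ≤ i ∧ i ≤ (m α : ℤ)

/-- The unit coordinate vector in the direction `j(β)` (zero if out of range). -/
def coordVec {r : ℕ} (m : Fin r → ℕ) (β : Fin r) (j : ℤ) : Dom r m :=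
  fun p => if p.1 = β ∧ ((p.2.val : ℤ) + 1 = j) then 1 else 0

/-- Partial derivative `∂_{j(β)} f` at `x`. -/
noncomputable def pd {r : ℕ} {m : Fin r → ℕ} (β : Fin r) (j : ℤ)
    (f : Dom r m → ℝ) (x : Dom r m) : ℝ :=
  fderiv ℝ f x (coordVec m β j)

/-- David–Hertling structure constants `c^{i(α)}_{j(β)k(γ)}`; out-of-range
values are interpreted as `0`. -/
def cDH {r : ℕ} (m : Fin r → ℕ) (α : Fin r) (i : ℤ) (β : Fin r) (j : ℤ)
    (γ : Fin r) (k : ℤ) : ℝ :=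
  if α = β ∧ α = γ ∧ i = j + k - 1 ∧ InR m α i ∧ InR m β j ∧ InR m γ k then 1 else 0

/-- Sum over all ambient indices `s(σ)`. -/
noncomputable def sumIdx {r : ℕ} (m : Fin r → ℕ) (f : Fin r → ℤ → ℝ) : ℝ :=
  ∑ σ : Fin r, ∑ s ∈ Finset.Icc (1 : ℤ) ((m σ : ℤ)), f σ s

/-- The components `V^{i(α)}_{j(β)} = δ_{αβ} X^{(i-j+1)(α)}` of `V = X∘`. -/
def Vcomp {r : ℕ} {m : Fin r → ℕ} (X : Fin r → ℤ → Dom r m → ℝ)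
    (α : Fin r) (i : ℤ) (β : Fin r) (j : ℤ) : Dom r m → ℝ :=
  fun x => if α = β then X α (i - j + 1) x else 0

/-- The tensor `A^{i(α)}_{j(β)k(γ)s(σ)}` measuring the failure of symmetry of `∇c`. -/
noncomputable def Atens {r : ℕ} {m : Fin r → ℕ}
    (Γ : Fin r → ℤ → Fin r → ℤ → Fin r → ℤ → Dom r m → ℝ)
    (α : Fin r) (i : ℤ) (β : Fin r) (j : ℤ) (γ : Fin r) (k : ℤ)
    (σ : Fin r) (s : ℤ) : Dom r m → ℝ :=
  fun x => sumIdx m (fun τ t =>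
    Γ α i β j τ t x * cDH m τ t γ k σ s
      - Γ τ t β j σ s x * cDH m α i γ k τ t
      - Γ α i γ k τ t x * cDH m τ t β j σ s
      + Γ τ t γ k σ s x * cDH m α i β j τ t)

/-- The curvature tensor `R^{a(α)}_{b(β)c(γ)d(δ)}` of the connection `Γ`. -/
noncomputable def Rm {r : ℕ} {m : Fin r → ℕ}
    (Γ : Fin r → ℤ → Fin r → ℤ → Fin r → ℤ → Dom r m → ℝ)
    (α : Fin r) (a : ℤ) (β : Fin r) (b : ℤ) (γ : Fin r) (c : ℤ)
    (δ : Fin r) (d : ℤ) (x : Dom r m) : ℝ :=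
  pd β b (Γ α a γ c δ d) x - pd γ c (Γ α a β b δ d) x
    + sumIdx m (fun σ s => Γ α a β b σ s x * Γ σ s γ c δ d x
        - Γ α a γ c σ s x * Γ σ s β b δ d x)


lemma sumIdx_delta {r : ℕ} (m : Fin r → ℕ) (α : Fin r) (t0 : ℤ) (c : ℝ) :
    sumIdx m (fun τ t => if τ = α ∧ t = t0 then c else 0)
      = if InR m α t0 then c else 0 := by
  unfold sumIdx
  rw [Finset.sum_eq_single α]
  · by_cases h : InR m α t0
    · rw [if_pos h]
      have ht : t0 ∈ Finset.Icc (1:ℤ) ((m α : ℤ)) := Finset.mem_Icc.mpr h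
      rw [Finset.sum_eq_single t0]
      · simp
      · intro b _ hb; simp [hb]
      · intro hc; exact absurd ht hc
    · rw [if_neg h]
      apply Finset.sum_eq_zero
      intro t ht
      have hc : ¬((α : Fin r) = α ∧ t = t0) := by
        rintro ⟨-, rfl⟩; exact h (Finset.mem_Icc.mp ht)
      dsimp only
      exact if_neg hc
  · intro b _ hb
    apply Finset.sum_eq_zero
    intro t _
    have hc : ¬(b = α ∧ t = t0) := fun hc => hb hc.1
    dsimp only
    exact if_neg hc
  · intro h; exact absurd (Finset.mem_univ α) h

lemma sumIdx_comb {r : ℕ} (m : Fin r → ℕ) (f g h k : Fin r → ℤ → ℝ) :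
    sumIdx m (fun τ t => f τ t - g τ t - h τ t + k τ t)
      = sumIdx m f - sumIdx m g - sumIdx m h + sumIdx m k := by
  simp [sumIdx, Finset.sum_add_distrib, Finset.sum_sub_distrib]

/-- The symmetry of `∇c` (vanishing of the tensor `A`) implies
the within-block shift relation `Γ^{i(α)}_{1(α)j(α)} = Γ^{(i−j+1)(α)}_{1(α)1(α)}`
for `i ≥ j`, and `Γ^{i(α)}_{1(α)j(α)} = 0` for `i < j`. -/
theorem statement12
    {r : ℕ} (hr : 1 ≤ r) (m : Fin r → ℕ) (hm : ∀ α, 1 ≤ m α)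
    (U : Set (Dom r m)) (hU : IsOpen U)
    (Γ : Fin r → ℤ → Fin r → ℤ → Fin r → ℤ → Dom r m → ℝ)
    (hΓ0 : ∀ α i β j γ k, ¬(InR m α i ∧ InR m β j ∧ InR m γ k) → Γ α i β j γ k = 0)
    (hΓsym : ∀ α i β j γ k, Γ α i β j γ k = Γ α i γ k β j)
    -- symmetry of ∇c
    (hSN : ∀ α i β j γ k σ s, InR m α i → InR m β j → InR m γ k → InR m σ s →
      ∀ x ∈ U, Atens Γ α i β j γ k σ s x = 0) :
    ∀ α i j, InR m α i → InR m α j → ∀ x ∈ U,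
      (j ≤ i → Γ α i α 1 α j x = Γ α (i - j + 1) α 1 α 1 x) ∧
      (i < j → Γ α i α 1 α j x = 0) := by
  intro α i j hi hj x hx
  have h1 : InR m α 1 := ⟨le_refl 1, by exact_mod_cast hm α⟩
  have key := hSN α i α 1 α j α 1 hi h1 hj h1 x hx
  have hA : Atens Γ α i α 1 α j α 1 x
      = Γ α i α 1 α j x - Γ α (i - j + 1) α 1 α 1 x := by
    have e : (fun (τ : Fin r) (t : ℤ) =>
        Γ α i α 1 τ t x * cDH m τ t α j α 1
          - Γ τ t α 1 α 1 x * cDH m α i α j τ t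
          - Γ α i α j τ t x * cDH m τ t α 1 α 1
          + Γ τ t α j α 1 x * cDH m α i α 1 τ t)
        = (fun (τ : Fin r) (t : ℤ) =>
        (if τ = α ∧ t = j then Γ α i α 1 α j x else 0)
          - (if τ = α ∧ t = i - j + 1 then Γ α (i - j + 1) α 1 α 1 x else 0)
          - (if τ = α ∧ t = 1 then Γ α i α j α 1 x else 0)
          + (if τ = α ∧ t = i then Γ α i α j α 1 x else 0)) := by
      funext τ t
      have e1 : Γ α i α 1 τ t x * cDH m τ t α j α 1
          = if τ = α ∧ t = j then Γ α i α 1 α j x else 0 := by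
        by_cases h : τ = α ∧ t = j
        · obtain ⟨h1', h2'⟩ := h
          subst τ; subst t
          rw [if_pos ⟨rfl, rfl⟩]
          unfold cDH
          rw [if_pos ⟨rfl, rfl, by ring, hj, hj, h1⟩]
          ring
        · rw [if_neg h]
          unfold cDH
          rw [if_neg (by rintro ⟨rfl, -, ht, -⟩; exact h ⟨rfl, by omega⟩), mul_zero]
      have e2 : Γ τ t α 1 α 1 x * cDH m α i α j τ t
          = if τ = α ∧ t = i - j + 1 then Γ α (i - j + 1) α 1 α 1 x else 0 := by
        by_cases h : τ = α ∧ t = i - j + 1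
        · obtain ⟨h1', h2'⟩ := h
          subst τ; subst t
          rw [if_pos ⟨rfl, rfl⟩]
          unfold cDH
          by_cases hin : InR m α (i - j + 1)
          · rw [if_pos ⟨rfl, rfl, by ring, hi, hj, hin⟩]; ring
          · have hz : Γ α (i - j + 1) α 1 α 1 x = 0 := by
              rw [hΓ0 α (i - j + 1) α 1 α 1 (by tauto)]
              exact Pi.zero_apply x
            rw [if_neg (by rintro ⟨-, -, -, -, -, hin'⟩; exact hin hin'), mul_zero, hz]
        · rw [if_neg h]
          unfold cDH
          rw [if_neg (by rintro ⟨-, rfl, hik, -⟩; exact h ⟨rfl, by omega⟩), mul_zero]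
      have e3 : Γ α i α j τ t x * cDH m τ t α 1 α 1
          = if τ = α ∧ t = 1 then Γ α i α j α 1 x else 0 := by
        by_cases h : τ = α ∧ t = 1
        · obtain ⟨h1', h2'⟩ := h
          subst τ; subst t
          rw [if_pos ⟨rfl, rfl⟩]
          unfold cDH
          rw [if_pos ⟨rfl, rfl, by ring, h1, h1, h1⟩]
          ring
        · rw [if_neg h]
          unfold cDH
          rw [if_neg (by rintro ⟨rfl, -, ht, -⟩; exact h ⟨rfl, by omega⟩), mul_zero]
      have e4 : Γ τ t α j α 1 x * cDH m α i α 1 τ t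
          = if τ = α ∧ t = i then Γ α i α j α 1 x else 0 := by
        by_cases h : τ = α ∧ t = i
        · obtain ⟨h1', h2'⟩ := h
          subst τ; subst t
          rw [if_pos ⟨rfl, rfl⟩]
          unfold cDH
          rw [if_pos ⟨rfl, rfl, by ring, hi, h1, hi⟩]
          rw [hΓsym α i α j α 1]
          ring
        · rw [if_neg h]
          unfold cDH
          rw [if_neg (by rintro ⟨-, rfl, hik, -⟩; exact h ⟨rfl, by omega⟩), mul_zero]
      rw [e1, e2, e3, e4]
    show sumIdx m _ = _
    rw [e, sumIdx_comb, sumIdx_delta, sumIdx_delta, sumIdx_delta, sumIdx_delta,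
      if_pos hj, if_pos h1, if_pos hi]
    by_cases hin : InR m α (i - j + 1)
    · rw [if_pos hin]; ring
    · have hz : Γ α (i - j + 1) α 1 α 1 x = 0 := by
        rw [hΓ0 α (i - j + 1) α 1 α 1 (by tauto)]
        exact Pi.zero_apply x
      rw [if_neg hin, hz]
      ring
  have main : Γ α i α 1 α j x = Γ α (i - j + 1) α 1 α 1 x := by
    rw [hA] at key
    linarith
  constructor
  · intro _; exact main
  · intro hij
    rw [main, hΓ0 α (i - j + 1) α 1 α 1 (by
      rintro ⟨⟨hlo, -⟩, -⟩; omega)]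
    exact Pi.zero_apply x
end

section
/- Suppose the smooth Christoffel symbols Γ satisfy conditions (D1), (D2), (D3), as well as: (D4) ∂_{m(ρ)}Γ^{i(α)}_{j(β)k(γ)} = 0 whenever m > i; (D5) Γ^{i(α)}_{j(α)k(α)} = 0 whenever i − j − k ≤ −3; (D6) Γ^{i(α)}_{j(ρ)k(β)} = 0 whenever i − j − k < −1 (for α ≠ β, any ρ); and the three-curvature condition (3RC): Σ_s (R^s_{lmi} c^j_{ks} + R^s_{lik} c^j_{ms} + R^s_{lkm} c^j_{is}) = 0 for all ambient indices i, j, k, l, m, where R^k_{ijl} := ∂_iΓ^k_{jl} − ∂_jΓ^k_{il} + Σ_s (Γ^k_{is}Γ^s_{jl} − Γ^k_{js}Γ^s_{il}) and c are the David–Hertling structure constants. Then for all α ≠ β, all j ∈ {1,…,m_α} and all k ∈ {1,…,m_β}: ∂_{k(β)} Γ^{j(α)}_{2(α)j(α)} = 0 (whenever m_α ≥ 2). -/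
open scoped BigOperators

private lemma pd_congrU {r : ℕ} {m : Fin r → ℕ} {U : Set (Dom r m)} (hU : IsOpen U)
    {f g : Dom r m → ℝ} (h : ∀ y ∈ U, f y = g y) {x : Dom r m} (hx : x ∈ U)
    (β : Fin r) (j : ℤ) : pd β j f x = pd β j g x := by
  unfold pd
  have hfg : f =ᶠ[nhds x] g := Filter.eventuallyEq_of_mem (hU.mem_nhds hx) h
  rw [hfg.fderiv_eq]

private lemma pd_zeroU {r : ℕ} {m : Fin r → ℕ} {U : Set (Dom r m)} (hU : IsOpen U)
    {f : Dom r m → ℝ} (h : ∀ y ∈ U, f y = 0) {x : Dom r m} (hx : x ∈ U)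
    (β : Fin r) (j : ℤ) : pd β j f x = 0 := by
  rw [pd_congrU hU (g := fun _ => (0:ℝ)) h hx β j]
  simp [pd]

private lemma sumIdx_zero {r : ℕ} {m : Fin r → ℕ} {F : Fin r → ℤ → ℝ}
    (h : ∀ σ s, 1 ≤ s → s ≤ (m σ : ℤ) → F σ s = 0) : sumIdx m F = 0 :=
  Finset.sum_eq_zero fun σ _ => Finset.sum_eq_zero fun s hs =>
    h σ s (Finset.mem_Icc.mp hs).1 (Finset.mem_Icc.mp hs).2

private lemma sumIdx_single {r : ℕ} {m : Fin r → ℕ} {F : Fin r → ℤ → ℝ}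
    (α₀ : Fin r) (s₀ : ℤ) (h₀ : 1 ≤ s₀ ∧ s₀ ≤ (m α₀ : ℤ))
    (h : ∀ σ s, 1 ≤ s → s ≤ (m σ : ℤ) → ¬(σ = α₀ ∧ s = s₀) → F σ s = 0) :
    sumIdx m F = F α₀ s₀ := by
  unfold sumIdx
  rw [Fintype.sum_eq_single α₀ (fun σ hσ => Finset.sum_eq_zero fun s hs =>
    h σ s (Finset.mem_Icc.mp hs).1 (Finset.mem_Icc.mp hs).2 (fun hc => hσ hc.1))]
  exact Finset.sum_eq_single_of_mem s₀ (Finset.mem_Icc.mpr h₀)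
    (fun s hs hne => h α₀ s (Finset.mem_Icc.mp hs).1 (Finset.mem_Icc.mp hs).2
      (fun hc => hne hc.2))

theorem statement14
    {r : ℕ} (hr : 1 ≤ r) (m : Fin r → ℕ) (hm : ∀ α, 1 ≤ m α)
    (U : Set (Dom r m)) (hU : IsOpen U)
    (Γ : Fin r → ℤ → Fin r → ℤ → Fin r → ℤ → Dom r m → ℝ)
    (hΓs : ∀ α i β j γ k, ContDiffOn ℝ (⊤ : ℕ∞) (Γ α i β j γ k) U)
    (hΓ0 : ∀ α i β j γ k, ¬(InR m α i ∧ InR m β j ∧ InR m γ k) → Γ α i β j γ k = 0)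
    (hΓsym : ∀ α i β j γ k, Γ α i β j γ k = Γ α i γ k β j)
    (hD1 : ∀ α i β j γ k, InR m α i → InR m β j → InR m γ k →
      α ≠ β → β ≠ γ → α ≠ γ → ∀ x ∈ U, Γ α i β j γ k x = 0)
    (hD2a : ∀ α β, α ≠ β → ∀ i j k, InR m α i → InR m β j → InR m α k → ∀ x ∈ U,
      Γ α i β j α k x = if k ≤ i then Γ α (i - k + 1) β j α 1 x else 0)
    (hD2b : ∀ α β, α ≠ β → ∀ i j k, InR m α i → InR m β j → InR m β k → ∀ x ∈ U,
      Γ α i β j β k x = if j + k ≤ (m β : ℤ) + 1 then Γ α i β (j + k - 1) β 1 x else 0)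
    (hD3 : ∀ α i β j γ k, InR m α i → InR m β j → InR m γ k →
      i < max j k → ∀ x ∈ U, Γ α i β j γ k x = 0)
    (hD4 : ∀ ρ mm α i β j γ k, InR m ρ mm → InR m α i → InR m β j → InR m γ k →
      i < mm → ∀ x ∈ U, pd ρ mm (Γ α i β j γ k) x = 0)
    (hD5 : ∀ α i j k, InR m α i → InR m α j → InR m α k →
      i - j - k ≤ -3 → ∀ x ∈ U, Γ α i α j α k x = 0)
    (hD6 : ∀ ρ α β, α ≠ β → ∀ i j k, InR m α i → InR m ρ j → InR m β k →
      i - j - k < -1 → ∀ x ∈ U, Γ α i ρ j β k x = 0)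
    (hRC : ∀ ι i η j κ k ζ l μ mm,
      InR m ι i → InR m η j → InR m κ k → InR m ζ l → InR m μ mm → ∀ x ∈ U,
      sumIdx m (fun σ s =>
        Rm Γ σ s ζ l μ mm ι i x * cDH m η j κ k σ s
          + Rm Γ σ s ζ l ι i κ k x * cDH m η j μ mm σ s
          + Rm Γ σ s ζ l κ k μ mm x * cDH m η j ι i σ s) = 0)
    :
    ∀ α β, α ≠ β → 2 ≤ m α → ∀ j k, InR m α j → InR m β k →
      ∀ x ∈ U, pd β k (Γ α j α 2 α j) x = 0 := by
  intro α β hab hma2 j k hj hk x hx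
  have hα1 : InR m α 1 := ⟨le_refl 1, by exact_mod_cast hm α⟩
  have hα2 : InR m α 2 := ⟨by norm_num, by exact_mod_cast hma2⟩
  have hk1 := hk.1
  by_cases hj1 : j = 1
  · subst hj1
    exact pd_zeroU hU (fun y hy => hD3 α 1 α 2 α 1 hα1 hα2 hα1 (by omega) y hy) hx β k
  · obtain ⟨hja, hjb⟩ := hj
    have hj2 : 2 ≤ j := by omega
    have hαj : InR m α j := ⟨by omega, hjb⟩
    have hαj1 : InR m α (j-1) := ⟨by omega, by omega⟩
    -- Term 2 : R^{(j-1)(α)}_{k(β) j(α) 1(α)} = 0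
    have hT2 : Rm Γ α (j-1) β k α j α 1 x = 0 := by
      unfold Rm
      have e1 : pd β k (Γ α (j-1) α j α 1) x = 0 :=
        pd_zeroU hU (fun y hy => hD3 α (j-1) α j α 1 hαj1 hαj hα1 (by omega) y hy) hx β k
      have e2 : pd α j (Γ α (j-1) β k α 1) x = 0 :=
        hD4 α j α (j-1) β k α 1 hαj hαj1 hk hα1 (by omega) x hx
      have e3 : sumIdx m (fun σ s => Γ α (j-1) β k σ s x * Γ σ s α j α 1 x
          - Γ α (j-1) α j σ s x * Γ σ s β k α 1 x) = 0 := by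
        apply sumIdx_zero
        intro τ t ht1 ht2
        have hτt : InR m τ t := ⟨ht1, ht2⟩
        have hz2 : Γ α (j-1) α j τ t x = 0 :=
          hD3 α (j-1) α j τ t hαj1 hαj hτt (by omega) x hx
        have hz1 : Γ α (j-1) β k τ t x * Γ τ t α j α 1 x = 0 := by
          by_cases hτα : τ = α
          · rw [hτα] at hτt ⊢
            by_cases htj : t < j
            · rw [hD3 α t α j α 1 hτt hαj hα1 (by omega) x hx, mul_zero]
            · rw [hD3 α (j-1) β k α t hαj1 hk hτt (by omega) x hx, zero_mul]
          · by_cases hτβ : τ = β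
            · rw [hτβ] at hτt ⊢
              by_cases htj : t < j
              · rw [hD6 α β α (Ne.symm hab) t j 1 hτt hαj hα1 (by omega) x hx, mul_zero]
              · rw [hD6 β α β hab (j-1) k t hαj1 hk hτt (by omega) x hx, zero_mul]
            · rw [hD1 α (j-1) β k τ t hαj1 hk hτt hab (fun h => hτβ h.symm)
                (fun h => hτα h.symm) x hx, zero_mul]
        rw [hz1, hz2]; ring
      rw [e1, e2, e3]; ring
    -- Term 3 : R^{1(α)}_{k(β) 1(α) 2(α)} = 0
    have hT3 : Rm Γ α 1 β k α 1 α 2 x = 0 := by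
      unfold Rm
      have e1 : pd β k (Γ α 1 α 1 α 2) x = 0 :=
        pd_zeroU hU (fun y hy => hD3 α 1 α 1 α 2 hα1 hα1 hα2 (by omega) y hy) hx β k
      have e2 : pd α 1 (Γ α 1 β k α 2) x = 0 :=
        pd_zeroU hU (fun y hy => hD3 α 1 β k α 2 hα1 hk hα2 (by omega) y hy) hx α 1
      have e3 : sumIdx m (fun σ s => Γ α 1 β k σ s x * Γ σ s α 1 α 2 x
          - Γ α 1 α 1 σ s x * Γ σ s β k α 2 x) = 0 := by
        apply sumIdx_zero
        intro τ t ht1 ht2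
        have hτt : InR m τ t := ⟨ht1, ht2⟩
        have hz1 : Γ α 1 β k τ t x * Γ τ t α 1 α 2 x = 0 := by
          by_cases hτα : τ = α
          · rw [hτα] at hτt ⊢
            by_cases ht : t < 2
            · rw [hD3 α t α 1 α 2 hτt hα1 hα2 (by omega) x hx, mul_zero]
            · rw [hD3 α 1 β k α t hα1 hk hτt (by omega) x hx, zero_mul]
          · by_cases hτβ : τ = β
            · rw [hτβ] at hτt ⊢
              by_cases ht : t < 2
              · rw [hD6 α β α (Ne.symm hab) t 1 2 hτt hα1 hα2 (by omega) x hx, mul_zero]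
              · rw [hD6 β α β hab 1 k t hα1 hk hτt (by omega) x hx, zero_mul]
            · rw [hD1 α 1 β k τ t hα1 hk hτt hab (fun h => hτβ h.symm)
                (fun h => hτα h.symm) x hx, zero_mul]
        have hz2 : Γ α 1 α 1 τ t x * Γ τ t β k α 2 x = 0 := by
          by_cases hτα : τ = α
          · rw [hτα] at hτt ⊢
            by_cases ht : t < 2
            · rw [hD3 α t β k α 2 hτt hk hα2 (by omega) x hx, mul_zero]
            · rw [hD3 α 1 α 1 α t hα1 hα1 hτt (by omega) x hx, zero_mul]
          · by_cases hτβ : τ = β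
            · rw [hτβ] at hτt ⊢
              by_cases ht : t < 2
              · rw [hD6 β β α (Ne.symm hab) t k 2 hτt hk hα2 (by omega) x hx, mul_zero]
              · rw [hD6 α α β hab 1 1 t hα1 hα1 hτt (by omega) x hx, zero_mul]
            · rw [hD1 τ t β k α 2 hτt hk hα2 (fun h => hτβ h) (Ne.symm hab)
                (fun h => hτα h) x hx, mul_zero]
        rw [hz1, hz2]; ring
      rw [e1, e2, e3]; ring
    -- Term 1 : R^{j(α)}_{k(β) 2(α) j(α)} = target derivative
    have hT1 : Rm Γ α j β k α 2 α j x = pd β k (Γ α j α 2 α j) x := by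
      unfold Rm
      have e2 : pd α 2 (Γ α j β k α j) x = 0 := by
        have hcongr : ∀ y ∈ U, Γ α j β k α j y = Γ α 1 β k α 1 y := by
          intro y hy
          have e := hD2a α β hab j k j hαj hk hαj y hy
          rw [if_pos le_rfl] at e
          have hjj : j - j + 1 = (1:ℤ) := by ring
          rw [hjj] at e
          exact e
        rw [pd_congrU hU hcongr hx α 2]
        exact hD4 α 2 α 1 β k α 1 hα2 hα1 hk hα1 (by norm_num) x hx
      have e3 : sumIdx m (fun σ s => Γ α j β k σ s x * Γ σ s α 2 α j x
          - Γ α j α 2 σ s x * Γ σ s β k α j x) = 0 := by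
        apply sumIdx_zero
        intro τ t ht1 ht2
        have hτt : InR m τ t := ⟨ht1, ht2⟩
        by_cases hτα : τ = α
        · rw [hτα] at hτt ⊢
          rcases lt_trichotomy t j with h | h | h
          · rw [hD3 α t α 2 α j hτt hα2 hαj (by omega) x hx,
                hD3 α t β k α j hτt hk hαj (by omega) x hx]
            ring
          · rw [h]
            ring
          · rw [hD3 α j β k α t hαj hk hτt (by omega) x hx,
                hD3 α j α 2 α t hαj hα2 hτt (by omega) x hx]
            ring
        · by_cases hτβ : τ = β
          · rw [hτβ] at hτt ⊢
            have hz1 : Γ α j β k β t x * Γ β t α 2 α j x = 0 := by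
              by_cases htj : t ≤ j
              · rw [hD6 α β α (Ne.symm hab) t 2 j hτt hα2 hαj (by omega) x hx, mul_zero]
              · rw [hD6 β α β hab j k t hαj hk hτt (by omega) x hx, zero_mul]
            have hz2 : Γ α j α 2 β t x * Γ β t β k α j x = 0 := by
              by_cases htj : t ≤ j - 1
              · rw [hD6 β β α (Ne.symm hab) t k j hτt hk hαj (by omega) x hx, mul_zero]
              · rw [hD6 α α β hab j 2 t hαj hα2 hτt (by omega) x hx, zero_mul]
            rw [hz1, hz2]; ring
          · rw [hD1 α j β k τ t hαj hk hτt hab (fun h => hτβ h.symm)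
                (fun h => hτα h.symm) x hx,
              hD1 τ t β k α j hτt hk hαj (fun h => hτβ h) (Ne.symm hab)
                (fun h => hτα h) x hx]
            ring
      rw [e2, e3]; ring
    -- apply 3RC
    have hsum := hRC α j α j α 1 β k α 2 hαj hαj hα1 hk hα2 x hx
    rw [sumIdx_single α j ⟨by omega, hjb⟩ ?_] at hsum
    · have c1 : cDH m α j α 1 α j = 1 := by
        rw [cDH, if_pos]
        exact ⟨rfl, rfl, by ring, hαj, hα1, hαj⟩
      have c2 : cDH m α j α 2 α j = 0 := by
        rw [cDH, if_neg]
        rintro ⟨-, -, h, -⟩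
        omega
      have c3 : cDH m α j α j α j = 0 := by
        rw [cDH, if_neg]
        rintro ⟨-, -, h, -⟩
        omega
      simp only [c1, c2, c3, mul_one, mul_zero, add_zero] at hsum
      rw [hT1] at hsum
      exact hsum
    · intro σ s hs1 hs2 hne
      have c1z : cDH m α j α 1 σ s = 0 := by
        rw [cDH, if_neg]
        rintro ⟨-, h2, h3, -⟩
        exact hne ⟨h2.symm, by omega⟩
      have ht2z : Rm Γ σ s β k α j α 1 x * cDH m α j α 2 σ s = 0 := by
        by_cases h2 : σ = α ∧ s = j - 1
        · obtain ⟨h2a, h2b⟩ := h2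
          rw [h2a, h2b]
          rw [hT2, zero_mul]
        · have hc : cDH m α j α 2 σ s = 0 := by
            rw [cDH, if_neg]
            rintro ⟨-, hb, hc, -⟩
            exact h2 ⟨hb.symm, by omega⟩
          rw [hc, mul_zero]
      have ht3z : Rm Γ σ s β k α 1 α 2 x * cDH m α j α j σ s = 0 := by
        by_cases h3 : σ = α ∧ s = 1
        · obtain ⟨h3a, h3b⟩ := h3
          rw [h3a, h3b]
          rw [hT3, zero_mul]
        · have hc : cDH m α j α j σ s = 0 := by
            rw [cDH, if_neg]
            rintro ⟨-, hb, hc, -⟩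
            exact h3 ⟨hb.symm, by omega⟩
          rw [hc, mul_zero]
      rw [c1z, mul_zero, ht2z, ht3z]
      ring
end

section
/- Suppose the smooth Christoffel symbols Γ satisfy: (D1) Γ^{i(α)}_{j(β)k(γ)} = 0 whenever α, β, γ are pairwise distinct; (D2) the shift relations Γ^{i(α)}_{j(β)k(α)} = Γ^{(i−k+1)(α)}_{j(β)1(α)}·1_{i≥k} and Γ^{i(α)}_{j(β)k(β)} = Γ^{i(α)}_{(j+k−1)(β)1(β)}·1_{j+k≤m_β+1} for α ≠ β; and the three-curvature condition (3RC): Σ_s (R^s_{lmi} c^j_{ks} + R^s_{lik} c^j_{ms} + R^s_{lkm} c^j_{is}) = 0 for all ambient indices, where R^k_{ijl} := ∂_iΓ^k_{jl} − ∂_jΓ^k_{il} + Σ_s (Γ^k_{is}Γ^s_{jl} − Γ^k_{js}Γ^s_{il}) and c are the David–Hertling structure constants. Then for all β ≠ α and γ ≠ α, and all admissible indices j, l (block α), m (block β), i (block γ): ∂_{m(β)} Γ^{j(α)}_{l(α)i(γ)} = ∂_{i(γ)} Γ^{j(α)}_{l(α)m(β)}. -/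
open scoped BigOperators

section AuxL
variable {r : ℕ} {m : Fin r → ℕ}

lemma sumIdx_add (f g : Fin r → ℤ → ℝ) :
    sumIdx m (fun σ s => f σ s + g σ s) = sumIdx m f + sumIdx m g := by
  simp [sumIdx, Finset.sum_add_distrib]

lemma sumIdx_neg (f : Fin r → ℤ → ℝ) :
    sumIdx m (fun σ s => - f σ s) = - sumIdx m f := by
  simp [sumIdx]

lemma sumIdx_zero_s17 : sumIdx m (fun _ _ => (0:ℝ)) = 0 := by simp [sumIdx]

lemma sumIdx_delta_s17 (α : Fin r) (j k : ℤ) (hj : InR m α j) (hk : InR m α k)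
    (g : Fin r → ℤ → ℝ) :
    sumIdx m (fun σ s => g σ s * cDH m α j α k σ s)
      = if k ≤ j then g α (j - k + 1) else 0 := by
  unfold sumIdx
  dsimp only
  rw [Finset.sum_eq_single_of_mem α (Finset.mem_univ α) ?side]
  case side =>
    intro σ _ hσ
    apply Finset.sum_eq_zero
    intro s _
    have hc : cDH m α j α k σ s = 0 := by
      unfold cDH; rw [if_neg]; rintro ⟨-, h2, -⟩; exact hσ h2.symm
    rw [hc, mul_zero]
  by_cases hkj : k ≤ j
  · rw [if_pos hkj]
    rw [Finset.sum_eq_single_of_mem (j - k + 1)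
        (Finset.mem_Icc.mpr ⟨by omega, by omega⟩) ?side2]
    case side2 =>
      intro s _ hne
      have hc : cDH m α j α k α s = 0 := by
        unfold cDH; rw [if_neg]; rintro ⟨-, -, h3, -⟩; exact hne (by omega)
      rw [hc, mul_zero]
    have hc : cDH m α j α k α (j - k + 1) = 1 := by
      unfold cDH; rw [if_pos ⟨rfl, rfl, by omega, hj, hk, ⟨by omega, by omega⟩⟩]
    rw [hc, mul_one]
  · rw [if_neg hkj]
    apply Finset.sum_eq_zero
    intro s hs
    have hs' := Finset.mem_Icc.mp hs
    have hc : cDH m α j α k α s = 0 := by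
      unfold cDH; rw [if_neg]; rintro ⟨-, -, h3, -⟩; omega
    rw [hc, mul_zero]

lemma sum_if_Icc (M a b : ℤ) (h1 : 1 ≤ a) (h2 : b ≤ M) (F : ℤ → ℝ) :
    ∑ s ∈ Finset.Icc 1 M, (if a ≤ s ∧ s ≤ b then F s else 0)
      = ∑ s ∈ Finset.Icc a b, F s := by
  rw [← Finset.sum_filter]
  congr 1
  ext s
  simp only [Finset.mem_filter, Finset.mem_Icc]
  omega

lemma key_reflect (M j l : ℤ) (hl : 1 ≤ l) (hj : j ≤ M) (f g : ℤ → ℝ) :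
    ∑ s ∈ Finset.Icc (1:ℤ) M,
      ((if s ≤ j then f (j - s + 1) else 0) * (if l ≤ s then g (s - l + 1) else 0)
        - (if s ≤ j then g (j - s + 1) else 0) * (if l ≤ s then f (s - l + 1) else 0)) = 0 := by
  have e : ∀ (u v : ℤ → ℝ) (s : ℤ),
      (if s ≤ j then u (j - s + 1) else 0) * (if l ≤ s then v (s - l + 1) else 0)
        = if l ≤ s ∧ s ≤ j then u (j - s + 1) * v (s - l + 1) else 0 := by
    intro u v s
    by_cases h1 : s ≤ j <;> by_cases h2 : l ≤ s <;> simp [h1, h2]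
  rw [Finset.sum_sub_distrib]
  rw [Finset.sum_congr rfl (fun s _ => e f g s), Finset.sum_congr rfl (fun s _ => e g f s)]
  rw [sum_if_Icc M l j hl hj, sum_if_Icc M l j hl hj]
  rw [sub_eq_zero]
  refine Finset.sum_nbij' (fun s => j + l - s) (fun s => j + l - s) ?_ ?_ ?_ ?_ ?_
  · intro a ha; have := Finset.mem_Icc.mp ha
    show j + l - a ∈ Finset.Icc l j
    rw [Finset.mem_Icc]; omega
  · intro a ha; have := Finset.mem_Icc.mp ha
    show j + l - a ∈ Finset.Icc l j
    rw [Finset.mem_Icc]; omega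
  · intro a _; show j + l - (j + l - a) = a; omega
  · intro a _; show j + l - (j + l - a) = a; omega
  · intro a ha
    show f (j - a + 1) * g (a - l + 1) = g (j - (j + l - a) + 1) * f ((j + l - a) - l + 1)
    have h1 : j - (j + l - a) + 1 = a - l + 1 := by omega
    have h2 : (j + l - a) - l + 1 = j - a + 1 := by omega
    rw [h1, h2]; ring

lemma key_shift (M mm i : ℤ) (hmm : 1 ≤ mm) (hi : 1 ≤ i) (G H : ℤ → ℝ) :
    ∑ s ∈ Finset.Icc (1:ℤ) M,
      ((if mm + s ≤ M + 1 then G (mm + s - 1) else 0) * (if i ≤ s then H (s - i + 1) else 0)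
        - (if i + s ≤ M + 1 then G (i + s - 1) else 0) * (if mm ≤ s then H (s - mm + 1) else 0)) = 0 := by
  have e : ∀ (a : ℤ) (s : ℤ),
      (if a + s ≤ M + 1 then G (a + s - 1) else 0) * (if i ≤ s then H (s - i + 1) else 0)
        = if i ≤ s ∧ s ≤ M + 1 - a then G (a + s - 1) * H (s - i + 1) else 0 := by
    intro a s
    by_cases h2 : i ≤ s
    · by_cases h1 : a + s ≤ M + 1
      · rw [if_pos h1, if_pos h2, if_pos ⟨h2, by omega⟩]
      · rw [if_neg h1, zero_mul, if_neg (by omega : ¬(i ≤ s ∧ s ≤ M + 1 - a))]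
    · rw [if_neg h2, mul_zero, if_neg (fun h => h2 h.1)]
  have e' : ∀ (a : ℤ) (s : ℤ),
      (if a + s ≤ M + 1 then G (a + s - 1) else 0) * (if mm ≤ s then H (s - mm + 1) else 0)
        = if mm ≤ s ∧ s ≤ M + 1 - a then G (a + s - 1) * H (s - mm + 1) else 0 := by
    intro a s
    by_cases h2 : mm ≤ s
    · by_cases h1 : a + s ≤ M + 1
      · rw [if_pos h1, if_pos h2, if_pos ⟨h2, by omega⟩]
      · rw [if_neg h1, zero_mul, if_neg (by omega : ¬(mm ≤ s ∧ s ≤ M + 1 - a))]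
    · rw [if_neg h2, mul_zero, if_neg (fun h => h2 h.1)]
  rw [Finset.sum_sub_distrib]
  rw [Finset.sum_congr rfl (fun s _ => e mm s), Finset.sum_congr rfl (fun s _ => e' i s)]
  rw [sum_if_Icc M i (M + 1 - mm) hi (by omega), sum_if_Icc M mm (M + 1 - i) hmm (by omega)]
  rw [sub_eq_zero]
  refine Finset.sum_nbij' (fun s => s + mm - i) (fun s => s + i - mm) ?_ ?_ ?_ ?_ ?_
  · intro a ha; have := Finset.mem_Icc.mp ha
    show a + mm - i ∈ Finset.Icc mm (M + 1 - i)
    rw [Finset.mem_Icc]; omega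
  · intro a ha; have := Finset.mem_Icc.mp ha
    show a + i - mm ∈ Finset.Icc i (M + 1 - mm)
    rw [Finset.mem_Icc]; omega
  · intro a _; show (a + mm - i) + i - mm = a; omega
  · intro a _; show (a + i - mm) + mm - i = a; omega
  · intro a ha
    show G (mm + a - 1) * H (a - i + 1) = G (i + (a + mm - i) - 1) * H ((a + mm - i) - mm + 1)
    have h1 : i + (a + mm - i) - 1 = mm + a - 1 := by omega
    have h2 : (a + mm - i) - mm + 1 = a - i + 1 := by omega
    rw [h1, h2]

end AuxL

lemma sumIdx_add3 {r : ℕ} {m : Fin r → ℕ} (f g h : Fin r → ℤ → ℝ) :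
    sumIdx m (fun σ s => f σ s + g σ s + h σ s)
      = sumIdx m f + sumIdx m g + sumIdx m h := by
  simp [sumIdx, Finset.sum_add_distrib]

lemma Rm_antisym {r : ℕ} {m : Fin r → ℕ}
    (Γ : Fin r → ℤ → Fin r → ℤ → Fin r → ℤ → Dom r m → ℝ)
    (α : Fin r) (a : ℤ) (β : Fin r) (b : ℤ) (γ : Fin r) (c : ℤ)
    (δ : Fin r) (d : ℤ) (x : Dom r m) :
    Rm Γ α a β b γ c δ d x + Rm Γ α a γ c β b δ d x = 0 := by
  unfold Rm
  have e : (fun (σ : Fin r) (s : ℤ) =>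
      Γ α a β b σ s x * Γ σ s γ c δ d x - Γ α a γ c σ s x * Γ σ s β b δ d x)
      = fun (σ : Fin r) (s : ℤ) =>
        -(Γ α a γ c σ s x * Γ σ s β b δ d x - Γ α a β b σ s x * Γ σ s γ c δ d x) := by
    funext σ s; ring
  rw [e, sumIdx_neg]
  ring

lemma Rm_bianchi {r : ℕ} {m : Fin r → ℕ}
    (Γ : Fin r → ℤ → Fin r → ℤ → Fin r → ℤ → Dom r m → ℝ)
    (hΓsym : ∀ α i β j γ k, Γ α i β j γ k = Γ α i γ k β j)
    (α : Fin r) (a : ℤ) (β : Fin r) (b : ℤ) (γ : Fin r) (c : ℤ)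
    (δ : Fin r) (d : ℤ) (x : Dom r m) :
    Rm Γ α a β b γ c δ d x + Rm Γ α a γ c δ d β b x + Rm Γ α a δ d β b γ c x = 0 := by
  unfold Rm
  rw [hΓsym α a δ d β b, hΓsym α a γ c β b, hΓsym α a δ d γ c]
  have hq : sumIdx m (fun σ s => Γ α a β b σ s x * Γ σ s γ c δ d x
        - Γ α a γ c σ s x * Γ σ s β b δ d x)
      + sumIdx m (fun σ s => Γ α a γ c σ s x * Γ σ s δ d β b x
        - Γ α a δ d σ s x * Γ σ s γ c β b x)
      + sumIdx m (fun σ s => Γ α a δ d σ s x * Γ σ s β b γ c x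
        - Γ α a β b σ s x * Γ σ s δ d γ c x) = 0 := by
    rw [← sumIdx_add3]
    have e : (fun (σ : Fin r) (s : ℤ) =>
        (Γ α a β b σ s x * Γ σ s γ c δ d x - Γ α a γ c σ s x * Γ σ s β b δ d x)
          + (Γ α a γ c σ s x * Γ σ s δ d β b x - Γ α a δ d σ s x * Γ σ s γ c β b x)
          + (Γ α a δ d σ s x * Γ σ s β b γ c x - Γ α a β b σ s x * Γ σ s δ d γ c x))
        = fun _ _ => (0:ℝ) := by
      funext σ s
      have e1 := congrFun (hΓsym σ s δ d β b) x
      have e2 := congrFun (hΓsym σ s γ c β b) x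
      have e3 := congrFun (hΓsym σ s δ d γ c) x
      rw [e1, e2, e3]; ring
    rw [e, sumIdx_zero_s17]
  linarith [hq]


theorem statement17
    {r : ℕ} (hr : 1 ≤ r) (m : Fin r → ℕ) (hm : ∀ α, 1 ≤ m α)
    (U : Set (Dom r m)) (hU : IsOpen U)
    (Γ : Fin r → ℤ → Fin r → ℤ → Fin r → ℤ → Dom r m → ℝ)
    (hΓs : ∀ α i β j γ k, ContDiffOn ℝ (⊤ : ℕ∞) (Γ α i β j γ k) U)
    (hΓ0 : ∀ α i β j γ k, ¬(InR m α i ∧ InR m β j ∧ InR m γ k) → Γ α i β j γ k = 0)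
    (hΓsym : ∀ α i β j γ k, Γ α i β j γ k = Γ α i γ k β j)
    (hD1 : ∀ α i β j γ k, InR m α i → InR m β j → InR m γ k →
      α ≠ β → β ≠ γ → α ≠ γ → ∀ x ∈ U, Γ α i β j γ k x = 0)
    (hD2a : ∀ α β, α ≠ β → ∀ i j k, InR m α i → InR m β j → InR m α k → ∀ x ∈ U,
      Γ α i β j α k x = if k ≤ i then Γ α (i - k + 1) β j α 1 x else 0)
    (hD2b : ∀ α β, α ≠ β → ∀ i j k, InR m α i → InR m β j → InR m β k → ∀ x ∈ U,
      Γ α i β j β k x = if j + k ≤ (m β : ℤ) + 1 then Γ α i β (j + k - 1) β 1 x else 0)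
    (hRC : ∀ ι i η j κ k ζ l μ mm,
      InR m ι i → InR m η j → InR m κ k → InR m ζ l → InR m μ mm → ∀ x ∈ U,
      sumIdx m (fun σ s =>
        Rm Γ σ s ζ l μ mm ι i x * cDH m η j κ k σ s
          + Rm Γ σ s ζ l ι i κ k x * cDH m η j μ mm σ s
          + Rm Γ σ s ζ l κ k μ mm x * cDH m η j ι i σ s) = 0)
    :
    ∀ α β γ, β ≠ α → γ ≠ α → ∀ j l mm i,
      InR m α j → InR m α l → InR m β mm → InR m γ i →
      ∀ x ∈ U, pd β mm (Γ α j α l γ i) x = pd γ i (Γ α j α l β mm) x := by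
  intro α β γ hβα hγα j l mm i hj hl hmm hi x hx
  have h1r : InR m α 1 := ⟨le_refl 1, by exact_mod_cast hm α⟩
  -- Step A: the basic consequence of the three-curvature condition
  have stepA : ∀ (β' : Fin r) (mm' : ℤ) (γ' : Fin r) (i' : ℤ), β' ≠ α → γ' ≠ α →
      InR m β' mm' → InR m γ' i' → ∀ j' l', InR m α j' → InR m α l' →
      Rm Γ α j' β' mm' γ' i' α l' x
        + (if l' ≤ j' then Rm Γ α (j' - l' + 1) β' mm' α 1 γ' i' x else 0) = 0 := by
    intro β' mm' γ' i' hβ' hγ' hmm' hi' j' l' hj' hl'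
    have h := hRC α l' α j' α 1 β' mm' γ' i' hl' hj' h1r hmm' hi' x hx
    rw [sumIdx_add3] at h
    rw [sumIdx_delta_s17 α j' 1 hj' h1r] at h
    rw [sumIdx_delta_s17 α j' l' hj' hl'] at h
    rw [if_pos hj'.1] at h
    have h2 : sumIdx m (fun σ s => Rm Γ σ s β' mm' α l' α 1 x * cDH m α j' γ' i' σ s) = 0 := by
      have e : (fun (σ : Fin r) (s : ℤ) =>
          Rm Γ σ s β' mm' α l' α 1 x * cDH m α j' γ' i' σ s) = fun _ _ => (0:ℝ) := by
        funext σ s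
        have hc : cDH m α j' γ' i' σ s = 0 := by
          unfold cDH; rw [if_neg]; rintro ⟨h1, -⟩; exact hγ' h1.symm
        rw [hc, mul_zero]
      rw [e, sumIdx_zero_s17]
    rw [h2] at h
    have e : j' - 1 + 1 = j' := by ring
    rw [e] at h
    linarith [h]
  -- Step C: vanishing of the auxiliary curvature components
  have stepC : ∀ (β' : Fin r) (mm' : ℤ) (γ' : Fin r) (i' : ℤ), β' ≠ α → γ' ≠ α →
      InR m β' mm' → InR m γ' i' → ∀ s, InR m α s →
      Rm Γ α s β' mm' α 1 γ' i' x = 0 := by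
    intro β' mm' γ' i' hβ' hγ' hmm' hi' s hsr
    have hA := stepA β' mm' γ' i' hβ' hγ' hmm' hi' s 1 hsr h1r
    rw [if_pos hsr.1] at hA
    have es : s - 1 + 1 = s := by ring
    rw [es] at hA
    have hA' := stepA γ' i' β' mm' hγ' hβ' hi' hmm' s 1 hsr h1r
    rw [if_pos hsr.1] at hA'
    rw [es] at hA'
    have hb := Rm_bianchi Γ hΓsym α s β' mm' α 1 γ' i' x
    have ha1 := Rm_antisym Γ α s α 1 γ' i' β' mm' x
    have ha2 := Rm_antisym Γ α s β' mm' γ' i' α 1 x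
    linarith
  -- Step D: vanishing of the main curvature component
  have hR : Rm Γ α j β mm γ i α l x = 0 := by
    have hA := stepA β mm γ i hβα hγα hmm hi j l hj hl
    by_cases hlj : l ≤ j
    · rw [if_pos hlj] at hA
      have hC := stepC β mm γ i hβα hγα hmm hi (j - l + 1) ⟨by omega, by omega⟩
      linarith
    · rw [if_neg hlj] at hA; linarith
  -- vanishing of the quadratic term
  have hQ : sumIdx m (fun σ s => Γ α j β mm σ s x * Γ σ s γ i α l x
      - Γ α j γ i σ s x * Γ σ s β mm α l x) = 0 := by
    unfold sumIdx
    apply Finset.sum_eq_zero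
    intro σ _
    by_cases hσα : σ = α
    · subst hσα
      have hc : ∀ s ∈ Finset.Icc (1:ℤ) ((m σ : ℕ) : ℤ),
          Γ σ j β mm σ s x * Γ σ s γ i σ l x - Γ σ j γ i σ s x * Γ σ s β mm σ l x
            = (if s ≤ j then Γ σ (j - s + 1) β mm σ 1 x else 0)
                * (if l ≤ s then Γ σ (s - l + 1) γ i σ 1 x else 0)
              - (if s ≤ j then Γ σ (j - s + 1) γ i σ 1 x else 0)
                * (if l ≤ s then Γ σ (s - l + 1) β mm σ 1 x else 0) := by
        intro s hs
        have hsr : InR m σ s := Finset.mem_Icc.mp hs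
        rw [hD2a σ β (Ne.symm hβα) j mm s hj hmm hsr x hx,
            hD2a σ γ (Ne.symm hγα) s i l hsr hi hl x hx,
            hD2a σ γ (Ne.symm hγα) j i s hj hi hsr x hx,
            hD2a σ β (Ne.symm hβα) s mm l hsr hmm hl x hx]
      rw [Finset.sum_congr rfl hc]
      exact key_reflect ((m σ : ℕ) : ℤ) j l hl.1 hj.2
        (fun t => Γ σ t β mm σ 1 x) (fun t => Γ σ t γ i σ 1 x)
    · by_cases hβγ : β = γ
      · subst hβγ
        by_cases hσβ : σ = β
        · subst hσβ
          have hc : ∀ s ∈ Finset.Icc (1:ℤ) ((m σ : ℕ) : ℤ),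
              Γ α j σ mm σ s x * Γ σ s σ i α l x - Γ α j σ i σ s x * Γ σ s σ mm α l x
                = (if mm + s ≤ ((m σ : ℕ) : ℤ) + 1 then Γ α j σ (mm + s - 1) σ 1 x else 0)
                    * (if i ≤ s then Γ σ (s - i + 1) α l σ 1 x else 0)
                  - (if i + s ≤ ((m σ : ℕ) : ℤ) + 1 then Γ α j σ (i + s - 1) σ 1 x else 0)
                    * (if mm ≤ s then Γ σ (s - mm + 1) α l σ 1 x else 0) := by
            intro s hs
            have hsr : InR m σ s := Finset.mem_Icc.mp hs
            rw [hD2b α σ (Ne.symm hβα) j mm s hj hmm hsr x hx,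
                congrFun (hΓsym σ s σ i α l) x,
                hD2a σ α hβα s l i hsr hl hi x hx,
                hD2b α σ (Ne.symm hβα) j i s hj hi hsr x hx,
                congrFun (hΓsym σ s σ mm α l) x,
                hD2a σ α hβα s l mm hsr hl hmm x hx]
          rw [Finset.sum_congr rfl hc]
          exact key_shift ((m σ : ℕ) : ℤ) mm i hmm.1 hi.1
            (fun t => Γ α j σ t σ 1 x) (fun t => Γ σ t α l σ 1 x)
        · apply Finset.sum_eq_zero
          intro s hs
          dsimp only
          have hsr : InR m σ s := Finset.mem_Icc.mp hs
          rw [hD1 α j β mm σ s hj hmm hsr (Ne.symm hβα) (fun h => hσβ h.symm)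
                (fun h => hσα h.symm) x hx,
              hD1 α j β i σ s hj hi hsr (Ne.symm hβα) (fun h => hσβ h.symm)
                (fun h => hσα h.symm) x hx]
          ring
      · apply Finset.sum_eq_zero
        intro s hs
        dsimp only
        have hsr : InR m σ s := Finset.mem_Icc.mp hs
        by_cases hσβ : σ = β
        · subst hσβ
          rw [hD1 σ s γ i α l hsr hi hl hβγ hγα hβα x hx,
              hD1 α j γ i σ s hj hi hsr (Ne.symm hγα) (fun h => hβγ h.symm)
                (Ne.symm hβα) x hx]
          ring
        · by_cases hσγ : σ = γ
          · subst hσγ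
            rw [hD1 α j β mm σ s hj hmm hsr (Ne.symm hβα) hβγ (Ne.symm hγα) x hx,
                hD1 σ s β mm α l hsr hmm hl (fun h => hβγ h.symm) hβα hγα x hx]
            ring
          · rw [hD1 α j β mm σ s hj hmm hsr (Ne.symm hβα) (fun h => hσβ h.symm)
                  (fun h => hσα h.symm) x hx,
                hD1 α j γ i σ s hj hi hsr (Ne.symm hγα) (fun h => hσγ h.symm)
                  (fun h => hσα h.symm) x hx]
            ring
  -- conclusion
  rw [hΓsym α j α l γ i, hΓsym α j α l β mm]
  have hRdef : Rm Γ α j β mm γ i α l x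
      = pd β mm (Γ α j γ i α l) x - pd γ i (Γ α j β mm α l) x
        + sumIdx m (fun σ s => Γ α j β mm σ s x * Γ σ s γ i α l x
            - Γ α j γ i σ s x * Γ σ s β mm α l x) := rfl
  linarith [hR, hQ, hRdef]
end

section
/- Let Γ be smooth Christoffel symbols on U satisfying (D3): Γ^{i(α)}_{j(β)k(γ)} = 0 whenever i < max{j,k}, and let θ_1,…,θ_n be smooth functions on U satisfying, for all ambient indices h, i, j, the equation Σ_r c^r_{hj}∂_iθ_r + Σ_r c^r_{ih}∂_jθ_r − Σ_s c^s_{ij}∂_sθ_h = 2 Σ_{r,s} c^r_{hs}Γ^s_{ij}θ_r + Σ_{s,r,t} c^s_{ij} c^r_{hs} e^t ∂_tθ_r, where c are the David–Hertling structure constants and e^{i(α)} = δ^i_1. Then for every α with m_α ≥ 2: ∂_{2(α)} θ_{m_α(α)} = (2/m_α) (Σ_{k=2}^{m_α} Γ^{k(α)}_{2(α)k(α)}) θ_{m_α(α)}. -/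
open scoped BigOperators

/-- Auxiliary: a `sumIdx` of a pointwise-zero family vanishes. -/
lemma sumIdx_eq_zero' {r : ℕ} (m : Fin r → ℕ) (f : Fin r → ℤ → ℝ)
    (hf : ∀ σ s, 1 ≤ s → s ≤ (m σ : ℤ) → f σ s = 0) : sumIdx m f = 0 := by
  unfold sumIdx
  refine Finset.sum_eq_zero fun σ _ => Finset.sum_eq_zero fun s hs => ?_
  rw [Finset.mem_Icc] at hs
  exact hf σ s hs.1 hs.2

/-- Auxiliary: a `sumIdx` of a family supported at a single index. -/
lemma sumIdx_eq_single' {r : ℕ} (m : Fin r → ℕ) (f : Fin r → ℤ → ℝ)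
    (b : Fin r) (t : ℤ) (ht1 : 1 ≤ t) (ht2 : t ≤ (m b : ℤ))
    (hf : ∀ σ s, 1 ≤ s → s ≤ (m σ : ℤ) → ¬(σ = b ∧ s = t) → f σ s = 0) :
    sumIdx m f = f b t := by
  unfold sumIdx
  rw [Finset.sum_eq_single b]
  · rw [Finset.sum_eq_single t]
    · intro s hs hst
      rw [Finset.mem_Icc] at hs
      exact hf b s hs.1 hs.2 (by tauto)
    · intro h; exact absurd (Finset.mem_Icc.mpr ⟨ht1, ht2⟩) h
  · intro σ _ hσ
    refine Finset.sum_eq_zero fun s hs => ?_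
    rw [Finset.mem_Icc] at hs
    exact hf σ s hs.1 hs.2 (by tauto)
  · intro h; exact absurd (Finset.mem_univ b) h

/-- Under condition (D3), every solution `θ` of the
Dubrovin–Novikov–Tsarev equation (eq_for_g_bis) in canonical coordinates
satisfies `∂_{2(α)} θ_{m_α(α)} = (2/m_α)(Σ_{k=2}^{m_α} Γ^{k(α)}_{2(α)k(α)}) θ_{m_α(α)}`
for every block `α` of size `≥ 2`. -/
theorem statement19
    {r : ℕ} (hr : 1 ≤ r) (m : Fin r → ℕ) (hm : ∀ α, 1 ≤ m α)
    (U : Set (Dom r m)) (hU : IsOpen U)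
    (Γ : Fin r → ℤ → Fin r → ℤ → Fin r → ℤ → Dom r m → ℝ)
    (θ : Fin r → ℤ → Dom r m → ℝ)
    (hΓs : ∀ α i β j γ k, ContDiffOn ℝ (⊤ : ℕ∞) (Γ α i β j γ k) U)
    (hθs : ∀ α i, ContDiffOn ℝ (⊤ : ℕ∞) (θ α i) U)
    (hΓ0 : ∀ α i β j γ k, ¬(InR m α i ∧ InR m β j ∧ InR m γ k) → Γ α i β j γ k = 0)
    (hΓsym : ∀ α i β j γ k, Γ α i β j γ k = Γ α i γ k β j)
    -- (D3)
    (hD3 : ∀ α i β j γ k, InR m α i → InR m β j → InR m γ k →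
      i < max j k → ∀ x ∈ U, Γ α i β j γ k x = 0)
    -- the Dubrovin–Novikov–Tsarev equation (eq_for_g_bis):
    -- c^r_{hj}∂_iθ_r + c^r_{ih}∂_jθ_r − c^s_{ij}∂_sθ_h
    --   = 2 c^r_{hs}Γ^s_{ij}θ_r + c^s_{ij}c^r_{hs}e^t∂_tθ_r
    (heq : ∀ η h ι i κ j, InR m η h → InR m ι i → InR m κ j → ∀ x ∈ U,
      sumIdx m (fun ρ rr => cDH m ρ rr η h κ j * pd ι i (θ ρ rr) x)
        + sumIdx m (fun ρ rr => cDH m ρ rr ι i η h * pd κ j (θ ρ rr) x)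
        - sumIdx m (fun σ s => cDH m σ s ι i κ j * pd σ s (θ η h) x)
      = 2 * sumIdx m (fun ρ rr => sumIdx m (fun σ s =>
            cDH m ρ rr η h σ s * Γ σ s ι i κ j x * θ ρ rr x))
        + sumIdx m (fun σ s => sumIdx m (fun ρ rr =>
            cDH m σ s ι i κ j * cDH m ρ rr η h σ s *
              sumIdx m (fun τ t => (if t = 1 then (1 : ℝ) else 0) * pd τ t (θ ρ rr) x)))) :
    ∀ α, 2 ≤ m α → ∀ x ∈ U,
      pd α 2 (θ α (m α : ℤ)) x
        = (2 / (m α : ℝ)) * (∑ k ∈ Finset.Icc (2 : ℤ) ((m α : ℤ)), Γ α k α 2 α k x)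
            * θ α (m α : ℤ) x := by
  intro α hmα x hx
  have hMα : (2 : ℤ) ≤ (m α : ℤ) := by exact_mod_cast hmα
  set M : ℤ := (m α : ℤ) with hM
  -- `Γ^{1(α)}_{2(α)1(α)}` vanishes at `x` by (D3)
  have hΓ1 : Γ α 1 α 2 α 1 x = 0 :=
    hD3 α 1 α 2 α 1 ⟨le_refl 1, by omega⟩ ⟨by omega, by omega⟩ ⟨le_refl 1, by omega⟩
      (by omega) x hx
  -- the key family of identities, one for each `j ∈ [1, M]`
  have E : ∀ j ∈ Finset.Icc (1 : ℤ) M,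
      pd α 2 (θ α M) x
        + (if 2 ≤ j then pd α j (θ α (M + 2 - j)) x else 0)
        - (if j + 1 ≤ M then pd α (j + 1) (θ α (M + 1 - j)) x else 0)
      = 2 * (Γ α j α 2 α j x * θ α M x) := by
    intro j hj
    rw [Finset.mem_Icc] at hj
    have hIh : InR m α (M + 1 - j) := ⟨by omega, by omega⟩
    have hI2 : InR m α 2 := ⟨by omega, by omega⟩
    have hIj : InR m α j := ⟨hj.1, by omega⟩
    have key := heq α (M + 1 - j) α 2 α j hIh hI2 hIj x hx
    -- Term 1
    have e1 : sumIdx m (fun ρ rr => cDH m ρ rr α (M + 1 - j) α j * pd α 2 (θ ρ rr) x)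
        = pd α 2 (θ α M) x := by
      have h0 : ∀ σ s, 1 ≤ s → s ≤ (m σ : ℤ) → ¬(σ = α ∧ s = M) →
          cDH m σ s α (M + 1 - j) α j * pd α 2 (θ σ s) x = 0 := by
        intro σ s hs1 hs2 hne
        rcases em (σ = α ∧ σ = α ∧ s = (M + 1 - j) + j - 1 ∧ InR m σ s ∧
            InR m α (M + 1 - j) ∧ InR m α j) with hc | hc
        · exact absurd ⟨hc.1, by omega⟩ hne
        · unfold cDH; rw [if_neg hc]; ring
      rw [sumIdx_eq_single' m _ α M (by omega) (by omega) h0]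
      show cDH m α M α (M + 1 - j) α j * pd α 2 (θ α M) x = pd α 2 (θ α M) x
      unfold cDH
      rw [if_pos ⟨rfl, rfl, by omega, ⟨by omega, by omega⟩, hIh, hIj⟩, one_mul]
    -- Term 2
    have e2 : sumIdx m (fun ρ rr => cDH m ρ rr α 2 α (M + 1 - j) * pd α j (θ ρ rr) x)
        = if 2 ≤ j then pd α j (θ α (M + 2 - j)) x else 0 := by
      by_cases h2j : 2 ≤ j
      · rw [if_pos h2j]
        have h0 : ∀ σ s, 1 ≤ s → s ≤ (m σ : ℤ) → ¬(σ = α ∧ s = M + 2 - j) →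
            cDH m σ s α 2 α (M + 1 - j) * pd α j (θ σ s) x = 0 := by
          intro σ s hs1 hs2 hne
          rcases em (σ = α ∧ σ = α ∧ s = 2 + (M + 1 - j) - 1 ∧ InR m σ s ∧
              InR m α 2 ∧ InR m α (M + 1 - j)) with hc | hc
          · exact absurd ⟨hc.1, by omega⟩ hne
          · unfold cDH; rw [if_neg hc]; ring
        rw [sumIdx_eq_single' m _ α (M + 2 - j) (by omega) (by omega) h0]
        show cDH m α (M + 2 - j) α 2 α (M + 1 - j) * pd α j (θ α (M + 2 - j)) x
          = pd α j (θ α (M + 2 - j)) x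
        unfold cDH
        rw [if_pos ⟨rfl, rfl, by omega, ⟨by omega, by omega⟩, hI2, hIh⟩, one_mul]
      · rw [if_neg h2j]
        apply sumIdx_eq_zero'
        intro σ s hs1 hs2
        rcases em (σ = α ∧ σ = α ∧ s = 2 + (M + 1 - j) - 1 ∧ InR m σ s ∧
            InR m α 2 ∧ InR m α (M + 1 - j)) with hc | hc
        · exfalso
          obtain ⟨rfl, -, hs, -⟩ := hc
          omega
        · unfold cDH; rw [if_neg hc]; ring
    -- Term 3
    have e3 : sumIdx m (fun σ s => cDH m σ s α 2 α j * pd σ s (θ α (M + 1 - j)) x)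
        = if j + 1 ≤ M then pd α (j + 1) (θ α (M + 1 - j)) x else 0 := by
      by_cases h3j : j + 1 ≤ M
      · rw [if_pos h3j]
        have h0 : ∀ σ s, 1 ≤ s → s ≤ (m σ : ℤ) → ¬(σ = α ∧ s = j + 1) →
            cDH m σ s α 2 α j * pd σ s (θ α (M + 1 - j)) x = 0 := by
          intro σ s hs1 hs2 hne
          rcases em (σ = α ∧ σ = α ∧ s = 2 + j - 1 ∧ InR m σ s ∧
              InR m α 2 ∧ InR m α j) with hc | hc
          · exact absurd ⟨hc.1, by omega⟩ hne
          · unfold cDH; rw [if_neg hc]; ring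
        rw [sumIdx_eq_single' m _ α (j + 1) (by omega) (by omega) h0]
        show cDH m α (j + 1) α 2 α j * pd α (j + 1) (θ α (M + 1 - j)) x
          = pd α (j + 1) (θ α (M + 1 - j)) x
        unfold cDH
        rw [if_pos ⟨rfl, rfl, by omega, ⟨by omega, by omega⟩, hI2, hIj⟩, one_mul]
      · rw [if_neg h3j]
        apply sumIdx_eq_zero'
        intro σ s hs1 hs2
        rcases em (σ = α ∧ σ = α ∧ s = 2 + j - 1 ∧ InR m σ s ∧
            InR m α 2 ∧ InR m α j) with hc | hc
        · exfalso
          obtain ⟨rfl, -, hs, -⟩ := hc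
          omega
        · unfold cDH; rw [if_neg hc]; ring
    -- Term 4
    have e4 : sumIdx m (fun ρ rr => sumIdx m (fun σ s =>
          cDH m ρ rr α (M + 1 - j) σ s * Γ σ s α 2 α j x * θ ρ rr x))
        = Γ α j α 2 α j x * θ α M x := by
      have houter : ∀ ρ rr, 1 ≤ rr → rr ≤ (m ρ : ℤ) → ¬(ρ = α ∧ rr = M) →
          sumIdx m (fun σ s => cDH m ρ rr α (M + 1 - j) σ s * Γ σ s α 2 α j x * θ ρ rr x)
            = 0 := by
        intro ρ rr h1 h2 hne
        apply sumIdx_eq_zero'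
        intro σ s hs1 hs2
        rcases em (ρ = α ∧ ρ = σ ∧ rr = (M + 1 - j) + s - 1 ∧ InR m ρ rr ∧
            InR m α (M + 1 - j) ∧ InR m σ s) with hc | hc
        · obtain ⟨hρ, hσ, hrr, -⟩ := hc
          obtain hσ' : σ = α := hσ.symm.trans hρ
          have hrrM : rr ≠ M := fun h => hne ⟨hρ, h⟩
          have h2' : rr ≤ M := by rw [hρ] at h2; omega
          have hΓz : Γ σ s α 2 α j x = 0 := by
            rw [hσ']
            exact hD3 α s α 2 α j ⟨hs1, hσ' ▸ hs2⟩ hI2 hIj (by omega) x hx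
          rw [hΓz, mul_zero, zero_mul]
        · unfold cDH; rw [if_neg hc]; ring
      rw [sumIdx_eq_single' m _ α M (by omega) (by omega) houter]
      show sumIdx m (fun σ s => cDH m α M α (M + 1 - j) σ s * Γ σ s α 2 α j x * θ α M x)
        = Γ α j α 2 α j x * θ α M x
      have hinner : ∀ σ s, 1 ≤ s → s ≤ (m σ : ℤ) → ¬(σ = α ∧ s = j) →
          cDH m α M α (M + 1 - j) σ s * Γ σ s α 2 α j x * θ α M x = 0 := by
        intro σ s hs1 hs2 hne
        rcases em (α = α ∧ α = σ ∧ M = (M + 1 - j) + s - 1 ∧ InR m α M ∧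
            InR m α (M + 1 - j) ∧ InR m σ s) with hc | hc
        · exact absurd ⟨hc.2.1.symm, by omega⟩ hne
        · unfold cDH; rw [if_neg hc]; ring
      rw [sumIdx_eq_single' m _ α j hIj.1 hIj.2 hinner]
      show cDH m α M α (M + 1 - j) α j * Γ α j α 2 α j x * θ α M x
        = Γ α j α 2 α j x * θ α M x
      unfold cDH
      rw [if_pos ⟨rfl, rfl, by omega, ⟨by omega, by omega⟩, hIh, hIj⟩, one_mul]
    -- Term 5
    have e5 : sumIdx m (fun σ s => sumIdx m (fun ρ rr =>
          cDH m σ s α 2 α j * cDH m ρ rr α (M + 1 - j) σ s *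
            sumIdx m (fun τ t => (if t = 1 then (1 : ℝ) else 0) * pd τ t (θ ρ rr) x)))
        = 0 := by
      apply sumIdx_eq_zero'
      intro σ s hs1 hs2
      apply sumIdx_eq_zero'
      intro ρ rr h1 h2
      rcases em (σ = α ∧ σ = α ∧ s = 2 + j - 1 ∧ InR m σ s ∧
          InR m α 2 ∧ InR m α j) with hc | hc
      · obtain ⟨-, -, hs, -⟩ := hc
        rcases em (ρ = α ∧ ρ = σ ∧ rr = (M + 1 - j) + s - 1 ∧ InR m ρ rr ∧
            InR m α (M + 1 - j) ∧ InR m σ s) with hc2 | hc2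
        · exfalso
          obtain ⟨hρ, -, hrr, hr, -⟩ := hc2
          have h2' := hr.2
          rw [hρ] at h2'
          omega
        · have hz : cDH m ρ rr α (M + 1 - j) σ s = 0 := by
            unfold cDH; rw [if_neg hc2]
          rw [hz, mul_zero, zero_mul]
      · have hz : cDH m σ s α 2 α j = 0 := by
          unfold cDH; rw [if_neg hc]
        rw [hz, zero_mul, zero_mul]
    rw [e1, e2, e3, e4, e5, add_zero] at key
    exact key
  -- sum the identities over `j ∈ [1, M]`
  have SUM : (∑ j ∈ Finset.Icc (1 : ℤ) M,
        (pd α 2 (θ α M) x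
          + (if 2 ≤ j then pd α j (θ α (M + 2 - j)) x else 0)
          - (if j + 1 ≤ M then pd α (j + 1) (θ α (M + 1 - j)) x else 0)))
      = ∑ j ∈ Finset.Icc (1 : ℤ) M, 2 * (Γ α j α 2 α j x * θ α M x) :=
    Finset.sum_congr rfl E
  rw [Finset.sum_sub_distrib, Finset.sum_add_distrib, Finset.sum_const] at SUM
  have hcard : (Finset.Icc (1 : ℤ) M).card = m α := by
    rw [Int.card_Icc]; omega
  rw [hcard, nsmul_eq_mul] at SUM
  -- the telescoping of the middle terms
  have hT : (∑ j ∈ Finset.Icc (1 : ℤ) M,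
        if j + 1 ≤ M then pd α (j + 1) (θ α (M + 1 - j)) x else 0)
      = ∑ j ∈ Finset.Icc (1 : ℤ) M, if 2 ≤ j then pd α j (θ α (M + 2 - j)) x else 0 := by
    rw [← Finset.sum_filter, ← Finset.sum_filter]
    have hf1 : (Finset.Icc (1 : ℤ) M).filter (fun j => j + 1 ≤ M) = Finset.Icc 1 (M - 1) := by
      ext k
      simp only [Finset.mem_filter, Finset.mem_Icc]
      omega
    have hf2 : (Finset.Icc (1 : ℤ) M).filter (fun j => 2 ≤ j) = Finset.Icc 2 M := by
      ext k
      simp only [Finset.mem_filter, Finset.mem_Icc]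
      omega
    rw [hf1, hf2]
    rw [show Finset.Icc (2 : ℤ) M = Finset.map (addRightEmbedding 1) (Finset.Icc 1 (M - 1))
        from by rw [Finset.map_add_right_Icc]; norm_num]
    rw [Finset.sum_map]
    refine Finset.sum_congr rfl fun k hk => ?_
    simp only [addRightEmbedding_apply]
    rw [show M + 2 - (k + 1) = M + 1 - k from by ring]
  rw [hT] at SUM
  -- reshape the right-hand side
  have hsplit : (∑ j ∈ Finset.Icc (1 : ℤ) M, Γ α j α 2 α j x)
      = ∑ j ∈ Finset.Icc (2 : ℤ) M, Γ α j α 2 α j x := by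
    rw [show Finset.Icc (1 : ℤ) M = insert 1 (Finset.Icc 2 M) from by
        ext k
        simp only [Finset.mem_insert, Finset.mem_Icc]
        omega]
    rw [Finset.sum_insert (by simp), hΓ1, zero_add]
  have hR : (∑ j ∈ Finset.Icc (1 : ℤ) M, 2 * (Γ α j α 2 α j x * θ α M x))
      = 2 * (∑ j ∈ Finset.Icc (2 : ℤ) M, Γ α j α 2 α j x) * θ α M x := by
    rw [← Finset.mul_sum, ← Finset.sum_mul, hsplit, mul_assoc]
  rw [hR] at SUM
  have hm0 : (m α : ℝ) ≠ 0 := Nat.cast_ne_zero.mpr (by omega)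
  field_simp
  linear_combination SUM
end
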